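/- (Theorem 4(iii).) Let K ≥ 3, let c > 0 be a real number, let Δ : Fin K → ℝ with Δ₂ ≠ Δ₁, and let s¹,…,sᴷ be nonzero vectors in ℝ³, written sᵏ = (s_xᵏ, s_yᵏ, s_zᵏ). Suppose at least one of the following holds: (a) there exists a real α with s_xᵏ + α·s_yᵏ = 0 for all k; (b) there exists a real β with s_xᵏ + β·s_zᵏ = 0 for all k; (c) there exists a real γ with s_yᵏ + γ·s_zᵏ = 0 for all k. Set uᵏ = sᵏ/(c·‖sᵏ‖), and define the (K−2)×3 real matrix Ψ whose row indexed by k ∈ {3,…,K} is (u¹ − uᵏ)ᵀ − ((Δ_k − Δ₁)/(Δ₂ − Δ₁))·(u¹ − u²)ᵀ. Then rank(Ψ) ≤ 2; in particular Ψ, and hence T̄ = [0; Ψ; 0], does not have full column rank 3. -/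

import Mathlib

open Matrix

/-
All the vectors `uᵏ` are multiples of the `sᵏ`, so they lie in the same plane through the
origin; a normal vector of that plane is then orthogonal to every row of `Ψ`, each row being a
linear combination of the `uᵏ`. A nonzero vector in the kernel forces the rank below 3.
-/

theorem Matrix.rank_lt_card_width_of_mulVec_eq_zero {m n R : Type*} [Fintype n] [Field R]
    {M : Matrix m n R} {v : n → R} (hv : v ≠ 0) (hMv : M *ᵥ v = 0) :
    M.rank < Fintype.card n := by
  have hker : 0 < Module.finrank R (LinearMap.ker M.mulVecLin) :=
    Module.finrank_pos_iff_exists_ne_zero.2 ⟨⟨v, hMv⟩, fun h => hv (congrArg Subtype.val h)⟩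
  have hrank_nullity := LinearMap.finrank_range_add_finrank_ker M.mulVecLin
  rw [Module.finrank_fintype_fun_eq_card] at hrank_nullity
  exact (Nat.lt_add_right_iff_pos.2 hker).trans_eq hrank_nullity

theorem exists_ne_zero_forall_dotProduct_eq_zero_of_coordinate_plane {ι R : Type*}
    [CommRing R] [Nontrivial R] {w : ι → Fin 3 → R}
    (hplane :
      (∃ α : R, ∀ k, w k 0 + α * w k 1 = 0) ∨
      (∃ β : R, ∀ k, w k 0 + β * w k 2 = 0) ∨
      (∃ γ : R, ∀ k, w k 1 + γ * w k 2 = 0)) :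
    ∃ v : Fin 3 → R, v ≠ 0 ∧ ∀ k, w k ⬝ᵥ v = 0 := by
  rcases hplane with ⟨α, hα⟩ | ⟨β, hβ⟩ | ⟨γ, hγ⟩
  · refine ⟨![1, α, 0], fun h => by simpa using congrFun h 0, fun k => ?_⟩
    simpa [dotProduct, Fin.sum_univ_three, mul_comm] using hα k
  · refine ⟨![1, 0, β], fun h => by simpa using congrFun h 0, fun k => ?_⟩
    simpa [dotProduct, Fin.sum_univ_three, mul_comm] using hβ k
  · refine ⟨![0, 1, γ], fun h => by simpa using congrFun h 1, fun k => ?_⟩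
    simpa [dotProduct, Fin.sum_univ_three, mul_comm] using hγ k

/-- Theorem 4(iii): if the source positions all lie on a plane `x+αy=0`, `x+βz=0` or
`y+γz=0` through the origin of the reference array frame, then the block `Ψ` of the
reduced matrix `T̄ = [0; Ψ; 0]` has rank at most 2; in particular `T̄` does not have
full column rank 3. -/
theorem Tbar_rank_deficient_of_coplanar_with_origin
    (K : ℕ) (hK : 3 ≤ K) (c : ℝ)
    (Δ : Fin K → ℝ)
    (s : Fin K → EuclideanSpace ℝ (Fin 3))
    (hplane :
      (∃ α : ℝ, ∀ k, s k 0 + α * s k 1 = 0) ∨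
      (∃ β : ℝ, ∀ k, s k 0 + β * s k 2 = 0) ∨
      (∃ γ : ℝ, ∀ k, s k 1 + γ * s k 2 = 0))
    (u : Fin K → EuclideanSpace ℝ (Fin 3))
    (hu : ∀ k, u k = (c * ‖s k‖)⁻¹ • s k)
    (Ψ : Matrix (Fin (K - 2)) (Fin 3) ℝ)
    (hΨ : ∀ (i : Fin (K - 2)) (c3 : Fin 3), Ψ i c3 =
      (u ⟨0, by omega⟩ c3 - u ⟨(i : ℕ) + 2, by omega⟩ c3) -
        ((Δ ⟨(i : ℕ) + 2, by omega⟩ - Δ ⟨0, by omega⟩) /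
            (Δ ⟨1, by omega⟩ - Δ ⟨0, by omega⟩)) *
          (u ⟨0, by omega⟩ c3 - u ⟨1, by omega⟩ c3))
    (Tbar : Matrix (Fin 2 ⊕ (Fin (K - 2) ⊕ Fin (3 * K))) (Fin 3) ℝ)
    (hT : ∀ row col, Tbar row col =
      match row, col with
      | Sum.inl _, _ => 0
      | Sum.inr (Sum.inl i), c3 => Ψ i c3
      | Sum.inr (Sum.inr _), _ => 0) :
    Ψ.rank ≤ 2 ∧ Tbar.rank < 3 := by
  obtain ⟨v, hv, hsv⟩ :=
    exists_ne_zero_forall_dotProduct_eq_zero_of_coordinate_plane (w := fun k => (s k).ofLp) hplane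
  have huv (k : Fin K) : (u k).ofLp ⬝ᵥ v = 0 := by
    rw [hu k, WithLp.ofLp_smul, smul_dotProduct, hsv k, smul_zero]
  have hΨv : Ψ *ᵥ v = 0 := by
    funext i
    have hrow : Ψ i = (u ⟨0, by omega⟩ - u ⟨i + 2, by omega⟩).ofLp -
        ((Δ ⟨i + 2, by omega⟩ - Δ ⟨0, by omega⟩) / (Δ ⟨1, by omega⟩ - Δ ⟨0, by omega⟩)) •
          (u ⟨0, by omega⟩ - u ⟨1, by omega⟩).ofLp :=
      funext (hΨ i)
    rw [mulVec, hrow]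
    simp only [WithLp.ofLp_sub, sub_dotProduct, smul_dotProduct, huv, sub_zero, smul_zero,
      Pi.zero_apply]
  have hTv : Tbar *ᵥ v = 0 := by
    funext row
    rcases row with _ | i | _
    · simp [mulVec, dotProduct, hT]
    · simpa [mulVec, dotProduct, hT] using congrFun hΨv i
    · simp [mulVec, dotProduct, hT]
  have hΨrank := rank_lt_card_width_of_mulVec_eq_zero hv hΨv
  have hTrank := rank_lt_card_width_of_mulVec_eq_zero hv hTv
  rw [Fintype.card_fin] at hΨrank hTrank
  exact ⟨Nat.le_of_lt_succ hΨrank, hTrank⟩
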